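/- Let β be defined on subsets of a finite matroid M by β(X) = r(M) − r(X) − Σ_{Y cyclic flat, X ⊊ Y} β(Y). If F is a nonempty filter in the lattice of cyclic flats Z(M), then Σ_{Y∈F} β(Y) = r(M) − Σ_{∅≠F'⊆F} (−1)^{|F'|+1} r(⋃F'). -/

import Mathlib

open Matroid Set

variable {α : Type*}

/-- An element that lies in every base of `M`; a coloop. -/
def MCoPaper.Coloop (M : Matroid α) (e : α) : Prop := ∀ B, M.IsBase B → e ∈ B

/-- A circuit: a minimal dependent subset of the ground set. -/
def MCoPaper.Circuit (M : Matroid α) (C : Set α) : Prop :=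
  C ⊆ M.E ∧ ¬ M.Indep C ∧ ∀ x ∈ C, M.Indep (C \ {x})

/-- A cyclic flat: a flat whose restriction has no coloops. -/
def MCoPaper.CyclicFlat (M : Matroid α) (F : Set α) : Prop :=
  M.IsFlat F ∧ ∀ e ∈ F, ¬ MCoPaper.Coloop (M ↾ F) e

/-- The rank of a set: the largest cardinality of an independent subset. -/
noncomputable def MCoPaper.rk (M : Matroid α) (X : Set α) : ℕ :=
  sSup {n | ∃ I, M.Indep I ∧ I ⊆ X ∧ I.ncard = n}

open MCoPaper Classical in
/-- Mason's β function. -/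
noncomputable def MCoPaper.beta [Fintype α] (M : Matroid α) (X : Finset α) : ℤ :=
  (rk M M.E : ℤ) - rk M ↑X -
    ∑ Y ∈ (Finset.univ.filter (fun Y : Finset α => CyclicFlat M ↑Y ∧ X ⊂ Y)).attach,
      MCoPaper.beta M Y.1
  termination_by (Fintype.card α - X.card : ℕ)
  decreasing_by
    have hY := Y.2
    simp only [Finset.mem_filter, Finset.mem_univ, true_and] at hY
    have h1 : X.card < Y.1.card := Finset.card_lt_card hY.2
    have h2 : Y.1.card ≤ Fintype.card α := Y.1.card_le_univ
    omega

open MCoPaper Classical in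
/-- Mason's α function. -/
noncomputable def MCoPaper.alpha [Fintype α] (M : Matroid α) (X : Finset α) : ℤ :=
  ((X.card : ℤ) - rk M ↑X) -
    ∑ F ∈ (Finset.univ.filter (fun F : Finset α => M.IsFlat ↑F ∧ F ⊂ X)).attach,
      MCoPaper.alpha M F.1
  termination_by X.card
  decreasing_by
    have hF := F.2
    simp only [Finset.mem_filter, Finset.mem_univ, true_and] at hF
    exact Finset.card_lt_card hF.2

/-- `A : Fin n → Set α` is a presentation of `M`. -/
def MCoPaper.IsPresentation (M : Matroid α) {n : ℕ} (A : Fin n → Set α) : Prop :=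
  (∀ i, A i ⊆ M.E) ∧
    ∀ I : Set α, M.Indep I ↔ ∃ φ : α → Fin n, Set.InjOn φ I ∧ ∀ x ∈ I, x ∈ A (φ x)

/-- `M` is a transversal matroid. -/
def MCoPaper.Transversal (M : Matroid α) : Prop :=
  ∃ (n : ℕ) (A : Fin n → Set α), MCoPaper.IsPresentation M A

/-- `B` is a fundamental basis of `M`. -/
def MCoPaper.FundBasis (M : Matroid α) (B : Set α) : Prop :=
  M.IsBase B ∧ ∀ F, MCoPaper.CyclicFlat M F → F ⊆ M.closure (B ∩ F)

/-- `M` is a fundamental transversal matroid. -/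
def MCoPaper.FundTransversal (M : Matroid α) : Prop :=
  ∃ B, MCoPaper.FundBasis M B

open MCoPaper

/-! For a nonempty subfamily `T` of the filter `F`, the closure `Z` of `⋃ T` is again a cyclic
flat, so it lies in `F`, and the members of `F` containing every member of `T` are exactly the
cyclic flats containing `Z`. By the recursion defining `β`, the sum of `β` over those is
`r(M) - r(Z) = r(M) - r(⋃ T)`. The right-hand side is therefore `r(M)` minus the
inclusion–exclusion expansion of the sum of `β` over the union of the up-sets
`{Y ∈ F | X ⊆ Y}`, `X ∈ F`, and that union is `F` itself. -/

open Finset in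
lemma Finset.sum_filter_nonempty_powerset_neg_one_pow_card_succ {γ : Type*} {s : Finset γ}
    (hs : s.Nonempty) : ∑ t ∈ s.powerset.filter (·.Nonempty), (-1 : ℤ) ^ (#t + 1) = 1 := by
  classical
  have h := sum_powerset_neg_one_pow_card_of_nonempty hs
  rw [← sum_filter_add_sum_filter_not _ (·.Nonempty)] at h
  have hempty : s.powerset.filter (fun t => ¬ t.Nonempty) = {∅} := by
    ext t; simp +contextual [not_nonempty_iff_eq_empty]
  simp only [hempty, sum_singleton, card_empty, pow_zero] at h
  simp only [pow_succ, mul_neg_one, sum_neg_distrib]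
  linarith

open Finset in
lemma Finset.inclusion_exclusion_sum_upperBounds {ι : Type*} [Preorder ι] [DecidableLE ι]
    (s : Finset ι) (g : ι → ℤ) :
    ∑ t ∈ s.powerset.filter (·.Nonempty),
      (-1) ^ (#t + 1) * ∑ y ∈ s.filter (fun y => ∀ x ∈ t, x ≤ y), g y = ∑ y ∈ s, g y := by
  classical
  have hunion : s.biUnion (fun x => s.filter (x ≤ ·)) = s := by
    ext y
    simp only [mem_biUnion, mem_filter]
    exact ⟨fun ⟨_, _, hy, _⟩ => hy, fun hy => ⟨y, hy, hy, le_rfl⟩⟩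
  have hinter : ∀ t (ht : t ∈ s.powerset.filter (·.Nonempty)),
      t.inf' (mem_filter.1 ht).2 (fun x => s.filter (x ≤ ·))
        = s.filter (fun y => ∀ x ∈ t, x ≤ y) := by
    intro t ht
    ext y
    simp only [mem_inf', mem_filter]
    obtain ⟨x₀, hx₀⟩ := (mem_filter.1 ht).2
    exact ⟨fun h => ⟨(h x₀ hx₀).1, fun x hx => (h x hx).2⟩, fun h x hx => ⟨h.1, h.2 x hx⟩⟩
  rw [← hunion, inclusion_exclusion_sum_biUnion, hunion, ← sum_coe_sort]
  refine sum_congr rfl fun t _ => ?_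
  rw [hinter t t.2, smul_eq_mul]

namespace MCoPaper

-- At infinite rank both sides are `0`, since `sSup` of an unbounded subset of `ℕ` is `0`.
lemma rk_eq_toNat_eRk (M : Matroid α) (X : Set α) : rk M X = (M.eRk X).toNat := by
  have hset : {n | ∃ I, M.Indep I ∧ I ⊆ X ∧ I.ncard = n} = {n : ℕ | (n : ℕ∞) ≤ M.eRk X} := by
    ext n
    refine ⟨?_, fun hn => ?_⟩
    · rintro ⟨I, hI, hIX, rfl⟩
      obtain hfin | hinf := I.finite_or_infinite
      · show ((I.ncard : ℕ) : ℕ∞) ≤ _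
        rw [hfin.cast_ncard_eq]
        exact hI.encard_le_eRk_of_subset hIX
      · simp [hinf.ncard]
    · obtain ⟨I, hIX, hI, hIn⟩ := le_eRk_iff.1 hn
      exact ⟨I, hI, hIX, by simp [Set.ncard_def, hIn]⟩
  rw [rk, hset]
  cases h : M.eRk X with
  | top => simp
  | coe m =>
    simp only [Nat.cast_le, ENat.toNat_natCast]
    exact csSup_Iic

lemma rk_closure_eq (M : Matroid α) (X : Set α) : rk M (M.closure X) = rk M X := by
  simp [rk_eq_toNat_eRk]

lemma coloop_iff_isColoop {M : Matroid α} {e : α} : Coloop M e ↔ M.IsColoop e :=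
  isColoop_iff_forall_mem_isBase.symm

lemma cyclicFlat_iff {M : Matroid α} {F : Set α} :
    CyclicFlat M F ↔ M.IsFlat F ∧ ∀ e ∈ F, e ∈ M.closure (F \ {e}) := by
  refine and_congr_right fun hF => forall₂_congr fun e he => ?_
  have hFE := hF.subset_ground
  rw [coloop_iff_isColoop, isColoop_iff_notMem_closure_compl (M := M ↾ F) he, not_not,
    restrict_ground_eq, restrict_closure_eq _ Set.sdiff_subset hFE]
  exact and_iff_left he

lemma CyclicFlat.closure_sUnion {M : Matroid α} {𝒳 : Set (Set α)}
    (h𝒳 : ∀ X ∈ 𝒳, CyclicFlat M X) : CyclicFlat M (M.closure (⋃₀ 𝒳)) := by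
  refine cyclicFlat_iff.2 ⟨M.isFlat_closure _, fun e he => ?_⟩
  have hsub : ⋃₀ 𝒳 ⊆ M.closure (⋃₀ 𝒳) :=
    M.subset_closure _ (Set.sUnion_subset fun X hX => (h𝒳 X hX).1.subset_ground)
  by_cases heS : e ∈ ⋃₀ 𝒳
  · obtain ⟨X, hX, heX⟩ := heS
    have hXS : X ⊆ M.closure (⋃₀ 𝒳) := (Set.subset_sUnion_of_mem hX).trans hsub
    exact M.closure_subset_closure (Set.sdiff_subset_sdiff_left hXS)
      ((cyclicFlat_iff.1 (h𝒳 X hX)).2 e heX)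
  · exact M.closure_subset_closure (Set.subset_sdiff_singleton hsub heS) he

open Classical in
lemma beta_add_sum_beta_ssuperset [Fintype α] (M : Matroid α) (X : Finset α) :
    beta M X + ∑ Y ∈ Finset.univ.filter (fun Y : Finset α => CyclicFlat M ↑Y ∧ X ⊂ Y), beta M Y
      = rk M M.E - rk M ↑X := by
  rw [beta, Finset.sum_attach _ (fun Y => beta M Y)]
  ring

open Classical in
lemma CyclicFlat.sum_beta_superset [Fintype α] {M : Matroid α} {Z : Finset α}
    (hZ : CyclicFlat M ↑Z) :
    ∑ Y ∈ Finset.univ.filter (fun Y : Finset α => CyclicFlat M ↑Y ∧ Z ⊆ Y), beta M Y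
      = rk M M.E - rk M ↑Z := by
  have hsplit : Finset.univ.filter (fun Y : Finset α => CyclicFlat M ↑Y ∧ Z ⊆ Y)
      = insert Z (Finset.univ.filter (fun Y : Finset α => CyclicFlat M ↑Y ∧ Z ⊂ Y)) := by
    ext Y
    simp only [Finset.mem_filter, Finset.mem_univ, true_and, Finset.mem_insert,
      Finset.ssubset_iff_subset_ne]
    constructor
    · rintro ⟨hY, hZY⟩
      exact (eq_or_ne Z Y).imp Eq.symm fun hne => ⟨hY, hZY, hne⟩
    · rintro (rfl | ⟨hY, hZY, -⟩)
      exacts [⟨hZ, subset_rfl⟩, ⟨hY, hZY⟩]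
  rw [hsplit, Finset.sum_insert (by simp), beta_add_sum_beta_ssuperset]

open Classical in
lemma rk_biUnion_eq_sub_sum_beta [Fintype α] {M : Matroid α} {F T : Finset (Finset α)}
    (hcf : ∀ Y ∈ F, CyclicFlat M ↑Y)
    (hfilter : ∀ A ∈ F, ∀ B : Finset α, CyclicFlat M ↑B → A ⊆ B → B ∈ F)
    (hTF : T ⊆ F) (hT : T.Nonempty) :
    (rk M (⋃ X ∈ T, (↑X : Set α)) : ℤ)
      = rk M M.E - ∑ Y ∈ F.filter (fun Y => ∀ X ∈ T, X ⊆ Y), beta M Y := by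
  set S := ⋃ X ∈ T, (↑X : Set α)
  set Z := (M.closure S).toFinset
  have hZS : (↑Z : Set α) = M.closure S := Set.coe_toFinset _
  have hZ : CyclicFlat M ↑Z := by
    rw [hZS, show S = ⋃₀ ((↑) '' (↑T : Set (Finset α))) by simp [S]]
    exact CyclicFlat.closure_sUnion (by simpa using fun X hX => hcf X (hTF hX))
  have hupper : ∀ Y : Finset α, CyclicFlat M ↑Y → ((∀ X ∈ T, X ⊆ Y) ↔ Z ⊆ Y) := by
    intro Y hY
    have hSE : S ⊆ M.E := Set.iUnion₂_subset fun X hX => (hcf X (hTF hX)).1.subset_ground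
    have hSY : S ⊆ ↑Y ↔ ∀ X ∈ T, X ⊆ Y := by simp [S]
    rw [← Finset.coe_subset, hZS, ← hSY]
    exact ⟨fun h => hY.1.closure ▸ M.closure_subset_closure h, (M.subset_closure S hSE).trans⟩
  have hfilterZ : F.filter (fun Y => ∀ X ∈ T, X ⊆ Y)
      = Finset.univ.filter (fun Y : Finset α => CyclicFlat M ↑Y ∧ Z ⊆ Y) := by
    ext Y
    simp only [Finset.mem_filter, Finset.mem_univ, true_and]
    constructor
    · rintro ⟨hYF, hTY⟩
      exact ⟨hcf Y hYF, (hupper Y (hcf Y hYF)).1 hTY⟩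
    · rintro ⟨hY, hZY⟩
      obtain ⟨X, hX⟩ := hT
      exact ⟨hfilter X (hTF hX) Y hY ((hupper Y hY).2 hZY X hX), (hupper Y hY).2 hZY⟩
  rw [hfilterZ, hZ.sum_beta_superset, hZS, rk_closure_eq]
  ring

end MCoPaper

open Classical in
theorem stmt12 [Fintype α] (M : Matroid α) (F : Finset (Finset α)) (hne : F.Nonempty)
    (hcf : ∀ Y ∈ F, CyclicFlat M ↑Y)
    (hfilter : ∀ A ∈ F, ∀ B : Finset α, CyclicFlat M ↑B → A ⊆ B → B ∈ F) :
    ∑ Y ∈ F, beta M Y =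
      (rk M M.E : ℤ) - ∑ F' ∈ F.powerset.filter (fun F' => F'.Nonempty),
        (-1) ^ (F'.card + 1) * (rk M (⋃ Y ∈ F', (↑Y : Set α)) : ℤ) := by
  calc ∑ Y ∈ F, beta M Y
      = ∑ T ∈ F.powerset.filter (·.Nonempty),
          (-1) ^ (T.card + 1) * ∑ Y ∈ F.filter (fun Y => ∀ X ∈ T, X ⊆ Y), beta M Y := by
        convert (F.inclusion_exclusion_sum_upperBounds (beta M)).symm
    _ = ∑ T ∈ F.powerset.filter (·.Nonempty),
          (-1) ^ (T.card + 1) * ((rk M M.E : ℤ) - rk M (⋃ Y ∈ T, (↑Y : Set α))) := by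
        refine Finset.sum_congr rfl fun T hT => ?_
        obtain ⟨hTF, hT⟩ := Finset.mem_filter.1 hT
        rw [rk_biUnion_eq_sub_sum_beta hcf hfilter (Finset.mem_powerset.1 hTF) hT]
        ring
    _ = _ := by
        simp only [mul_sub, Finset.sum_sub_distrib, ← Finset.sum_mul,
          Finset.sum_filter_nonempty_powerset_neg_one_pow_card_succ hne, one_mul]
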